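/- arXiv:1805.05558 — 2 statements merged into one kernel-verified Lean document; each statement's English description precedes it below -/
import Mathlib

section
/- Let 𝒫 and 𝒢 be two classes of symmetric positive definite n×n real matrices such that every P ∈ 𝒫 commutes with every G ∈ 𝒢. If there exists P ∈ 𝒫 such that PA + AᵀP is positive definite, then for every G ∈ 𝒢 the matrix AG is positive stable. -/
open Matrix

/-- The complex spectrum of a real square matrix. -/
noncomputable def spec {n : ℕ} (A : Matrix (Fin n) (Fin n) ℝ) : Set ℂ :=
  spectrum ℂ (A.map (Complex.ofReal : ℝ → ℂ))

/-- A real diagonal matrix with strictly positive diagonal entries. -/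
def IsPosDiag {n : ℕ} (D : Matrix (Fin n) (Fin n) ℝ) : Prop :=
  D.IsDiag ∧ ∀ i, 0 < D i i

/-- All eigenvalues have positive real part. -/
def PosStable {n : ℕ} (A : Matrix (Fin n) (Fin n) ℝ) : Prop :=
  ∀ μ ∈ spec A, 0 < μ.re

/-- Multiplicative `D`-stability. -/
def DStable {n : ℕ} (A : Matrix (Fin n) (Fin n) ℝ) : Prop :=
  ∀ D, IsPosDiag D → PosStable (D * A)

/-! Since `G` and `P` commute, `GP` is symmetric positive definite, and
`(GP)(AG) + (AG)ᵀ(GP) = G (PA + AᵀP) G` is positive definite by congruence. So `GP` is a Lyapunov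
certificate for `AG`. The Lyapunov direction needed is elementary: if `Mv = μv` with `v ≠ 0`, then
`v* (HM + MᴴH) v = 2 Re μ · v* H v`, after complexifying the real positive definite matrices. -/

open ComplexOrder

namespace Matrix

variable {ι : Type*} [Fintype ι] [DecidableEq ι]

theorem PosDef.mul_of_commute {𝕜 : Type*} [RCLike 𝕜] {G P : Matrix ι ι 𝕜} (hG : G.PosDef)
    (hP : P.PosDef) (h : Commute G P) : (G * P).PosDef := by
  open MatrixOrder in
  exact ((hG.isStrictlyPositive.commute_iff hP.isStrictlyPositive).mp h).posDef

theorem conjTranspose_map_ofReal {m n : Type*} (M : Matrix m n ℝ) :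
    (M.map ((↑) : ℝ → ℂ))ᴴ = Mᵀ.map (↑) := by
  ext; simp

theorem map_ofReal_mul {m n o : Type*} [Fintype n] (M : Matrix m n ℝ) (N : Matrix n o ℝ) :
    (M * N).map ((↑) : ℝ → ℂ) = M.map (↑) * N.map (↑) :=
  Matrix.map_mul (f := Complex.ofRealHom)

theorem PosDef.map_ofReal {W : Matrix ι ι ℝ} (hW : W.PosDef) :
    (W.map ((↑) : ℝ → ℂ)).PosDef := by
  obtain ⟨S, hS, hSsymm, rfl⟩ : ∃ S : Matrix ι ι ℝ, IsUnit S ∧ Sᵀ = S ∧ W = S * S := by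
    open MatrixOrder in
    obtain ⟨hS, hSS⟩ :=
      CStarAlgebra.isStrictlyPositive_iff_isUnit_sqrt_and_eq_sqrt_mul_sqrt.mp hW.isStrictlyPositive
    exact ⟨CFC.sqrt W, hS, (CFC.sqrt_nonneg W).isSelfAdjoint, hSS⟩
  have hS' : Function.Injective (S.map ((↑) : ℝ → ℂ)).mulVec :=
    mulVec_injective_iff_isUnit.mpr (hS.map Complex.ofRealHom.mapMatrix)
  rw [map_ofReal_mul]
  nth_rw 1 [← hSsymm, ← conjTranspose_map_ofReal]
  exact .conjTranspose_mul_self _ hS'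

theorem re_pos_of_mem_spectrum_of_lyapunov {H M : Matrix ι ι ℂ} (hH : H.PosDef)
    (hHM : (H * M + Mᴴ * H).PosDef) {μ : ℂ} (hμ : μ ∈ spectrum ℂ M) : 0 < μ.re := by
  obtain ⟨v, hv⟩ := (Module.End.hasEigenvalue_iff_mem_spectrum.mpr
    (by rwa [spectrum_toLin'] : μ ∈ spectrum ℂ M.toLin')).exists_hasEigenvector
  have hMv : M *ᵥ v = μ • v := by simpa using hv.apply_eq_smul
  have hform : star v ⬝ᵥ ((H * M + Mᴴ * H) *ᵥ v) = (2 * μ.re : ℝ) * (star v ⬝ᵥ (H *ᵥ v)) := by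
    rw [add_mulVec, dotProduct_add, ← mulVec_mulVec, ← mulVec_mulVec, hMv,
      dotProduct_mulVec (star v) Mᴴ, ← star_mulVec, hMv, mulVec_smul, star_smul,
      dotProduct_smul, smul_dotProduct, ← add_smul, smul_eq_mul, RCLike.star_def,
      Complex.add_conj]
  have hpos := hHM.dotProduct_mulVec_pos hv.2
  rw [hform, mul_pos_iff_of_pos_right (hH.dotProduct_mulVec_pos hv.2), Complex.zero_lt_real] at hpos
  linarith

end Matrix

theorem posStable_of_lyapunov {n : ℕ} {H M : Matrix (Fin n) (Fin n) ℝ} (hH : H.PosDef)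
    (hHM : (H * M + Mᵀ * H).PosDef) : PosStable M := by
  refine fun μ hμ ↦ Matrix.re_pos_of_mem_spectrum_of_lyapunov hH.map_ofReal ?_ hμ
  have hHM' := hHM.map_ofReal
  rwa [Matrix.map_add _ Complex.ofReal_add, Matrix.map_ofReal_mul, Matrix.map_ofReal_mul,
    ← Matrix.conjTranspose_map_ofReal] at hHM'

theorem posStable_mul_of_commute {n : ℕ} {P G A : Matrix (Fin n) (Fin n) ℝ} (hP : P.PosDef)
    (hG : G.PosDef) (hPG : Commute P G) (hPA : (P * A + Aᵀ * P).PosDef) :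
    PosStable (A * G) := by
  refine posStable_of_lyapunov (hG.mul_of_commute hP hPG.symm) ?_
  have hGsymm : Gᵀ = G := hG.isHermitian
  have hconj : G * P * (A * G) + (A * G)ᵀ * (G * P) = Gᴴ * (P * A + Aᵀ * P) * G := by
    rw [conjTranspose_eq_transpose_of_trivial, hGsymm, transpose_mul, hGsymm]
    simp only [Matrix.mul_add, Matrix.add_mul, Matrix.mul_assoc, hPG.eq]
  rw [hconj]
  exact hPA.conjTranspose_mul_mul_same (mulVec_injective_iff_isUnit.mpr hG.isUnit)

/-- If PA + AᵀP is positive definite for some P ∈ 𝒬 where 𝒬, 𝒢 are commuting classes of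
symmetric positive definite matrices, then AG is positive stable for every G ∈ 𝒢. -/
theorem stmt_12 {n : ℕ} (𝒬 𝒢 : Set (Matrix (Fin n) (Fin n) ℝ))
    (h𝒬 : ∀ P ∈ 𝒬, P.PosDef) (h𝒢 : ∀ G ∈ 𝒢, G.PosDef)
    (hcomm : ∀ P ∈ 𝒬, ∀ G ∈ 𝒢, P * G = G * P)
    (A : Matrix (Fin n) (Fin n) ℝ)
    (hlyap : ∃ P ∈ 𝒬, (P * A + Aᵀ * P).PosDef) :
    ∀ G ∈ 𝒢, PosStable (A * G) := by
  obtain ⟨P, hP, hPA⟩ := hlyap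
  exact fun G hG ↦ posStable_mul_of_commute (h𝒬 P hP) (h𝒢 G hG) (hcomm P hP G hG) hPA
end

section
/- Every Lyapunov diagonally stable matrix is multiplicative D-stable: if there exists a positive diagonal matrix D₀ such that D₀A + AᵀD₀ is positive definite, then DA is positive stable for every positive diagonal matrix D. -/
open Matrix

/-! With `P = D₀ D⁻¹`, positive diagonal, one has `P (DA) + (DA)ᵀ P = D₀A + AᵀD₀`, so `DA`
satisfies Lyapunov's inequality. If `Bx = μx` with `x ≠ 0`, then
`x* (PB + BᵀP) x = 2 Re μ · x* P x`, and both quadratic forms are positive on the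
complexification; hence `Re μ > 0`. -/

open ComplexOrder

theorem Matrix.PosDef.map_ofReal_s14 {n : Type*} [Fintype n] {M : Matrix n n ℝ} (hM : M.PosDef) :
    (M.map (Complex.ofReal : ℝ → ℂ)).PosDef := by
  classical
  refine PosSemidef.posDef_iff_det_ne_zero ?_ |>.mpr ?_
  · obtain ⟨m, v, rfl⟩ := posSemidef_iff_eq_sum_vecMulVec.mp hM.posSemidef
    refine posSemidef_iff_eq_sum_vecMulVec.mpr ⟨m, fun i j => v i j, ?_⟩
    ext a b
    simp [sum_apply, vecMulVec_apply]
  · change (Complex.ofRealHom.mapMatrix M).det ≠ 0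
    rw [← RingHom.map_det]
    exact Complex.ofReal_ne_zero.mpr hM.det_pos.ne'

theorem Matrix.exists_mulVec_eq_smul_of_mem_spectrum {K n : Type*} [Field K] [Fintype n]
    [DecidableEq n] {A : Matrix n n K} {μ : K} (hμ : μ ∈ spectrum K A) :
    ∃ x ≠ 0, A *ᵥ x = μ • x := by
  rw [← spectrum_toLin', ← Module.End.hasEigenvalue_iff_mem_spectrum] at hμ
  obtain ⟨x, hx⟩ := hμ.exists_hasEigenvector
  exact ⟨x, hx.2, by simpa using hx.apply_eq_smul⟩

theorem Matrix.re_pos_of_posDef_lyapunov {𝕜 n : Type*} [RCLike 𝕜] [Fintype n]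
    {P B : Matrix n n 𝕜} (hP : P.PosDef) (hPB : (P * B + Bᴴ * P).PosDef) {μ : 𝕜} {x : n → 𝕜}
    (hx : x ≠ 0) (hBx : B *ᵥ x = μ • x) : 0 < RCLike.re μ := by
  have hquad : star x ⬝ᵥ ((P * B + Bᴴ * P) *ᵥ x) = (μ + star μ) * (star x ⬝ᵥ (P *ᵥ x)) := by
    rw [add_mulVec, dotProduct_add, ← mulVec_mulVec, ← mulVec_mulVec, hBx,
      dotProduct_mulVec (star x) Bᴴ, vecMul_conjTranspose, star_star, hBx, mulVec_smul,
      dotProduct_smul, star_smul, smul_dotProduct, smul_eq_mul, smul_eq_mul]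
    ring
  have hPBx := hPB.re_dotProduct_pos hx
  rw [hquad, RCLike.star_def, RCLike.add_conj, mul_assoc, RCLike.ofNat_mul_re,
    RCLike.re_ofReal_mul] at hPBx
  exact pos_of_mul_pos_left (by linarith) (hP.re_dotProduct_pos hx).le

theorem posStable_of_posDef_lyapunov {n : ℕ} {P B : Matrix (Fin n) (Fin n) ℝ} (hP : P.PosDef)
    (hPB : (P * B + Bᵀ * P).PosDef) : PosStable B := by
  intro μ hμ
  obtain ⟨x, hx, hBx⟩ := exists_mulVec_eq_smul_of_mem_spectrum hμ
  have hmap : (P * B + Bᵀ * P).map Complex.ofReal = P.map Complex.ofReal * B.map Complex.ofReal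
      + (B.map Complex.ofReal)ᴴ * P.map Complex.ofReal := by
    ext i j
    simp [mul_apply]
  exact re_pos_of_posDef_lyapunov hP.map_ofReal_s14 (hmap ▸ hPB.map_ofReal_s14) hx hBx

theorem Matrix.lyapunov_diagonal_div_diagonal_mul {n : Type*} [Fintype n] [DecidableEq n]
    {d : n → ℝ} (hd : ∀ i, d i ≠ 0) (e : n → ℝ) (A : Matrix n n ℝ) :
    diagonal (e / d) * (diagonal d * A) + (diagonal d * A)ᵀ * diagonal (e / d)
      = diagonal e * A + Aᵀ * diagonal e := by
  rw [transpose_mul, diagonal_transpose, ← mul_assoc, mul_assoc Aᵀ, diagonal_mul_diagonal,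
    diagonal_mul_diagonal]
  simp only [Pi.div_apply, div_mul_cancel₀ _ (hd _), mul_div_cancel₀ _ (hd _)]

/-- Every Lyapunov diagonally stable matrix is multiplicative D-stable. -/
theorem stmt_14 {n : ℕ} (A : Matrix (Fin n) (Fin n) ℝ)
    (h : ∃ D₀, IsPosDiag D₀ ∧ (D₀ * A + Aᵀ * D₀).PosDef) :
    DStable A := by
  obtain ⟨D₀, hD₀, hL⟩ := h
  intro D hD
  rw [← hD₀.1.diagonal_diag] at hL
  rw [← hD.1.diagonal_diag]
  refine posStable_of_posDef_lyapunov (P := diagonal (D₀.diag / D.diag))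
    (posDef_diagonal_iff.mpr fun i => div_pos (hD₀.2 i) (hD.2 i)) ?_
  rwa [lyapunov_diagonal_div_diagonal_mul (d := D.diag) fun i => (hD.2 i).ne']
end
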